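/- arXiv:math/0608789 — 2 statements merged into one kernel-verified Lean document; each statement's English description precedes it below -/
import Mathlib

section
/- For every real number x with 0 ≤ x ≤ 1, arcsin x ≤ φ(x), where φ(x) = (π(2 − √2)/(π − 2√2))·(√(1 + x) − √(1 − x)) / (√2(4 − π)/(π − 2√2) + √(1 + x) + √(1 − x)). -/
/-- The upper bound `φ` for `arcsin` obtained by the λ-method of Mitrinović–Vasić. -/
noncomputable def phiBound (x : ℝ) : ℝ :=
  (Real.pi * (2 - Real.sqrt 2) / (Real.pi - 2 * Real.sqrt 2)) *
      (Real.sqrt (1 + x) - Real.sqrt (1 - x)) /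
    (Real.sqrt 2 * (4 - Real.pi) / (Real.pi - 2 * Real.sqrt 2) +
      Real.sqrt (1 + x) + Real.sqrt (1 - x))

open Real Set

/-! Put `arcsin x = 2t` with `t ∈ [0, π/4]`. Then `√(1 ± x) = cos t ± sin t`, and the bound becomes
`g t ≥ 0` for `g t = (λ + 2) sin t - λ t - 2 t cos t`, where `λ = √2 (4 - π) / (π - 2√2)` is exactly the
value making `g (π/4) = 0`; also `g 0 = 0`.

Since `g' t = 8 sin (t/2) q (t/2)` with `q u = u cos u - (λ/4) sin u` concave and `q 0 = 0`, the derivative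
of `g` changes sign at most once, from `+` to `-`. So `g` first increases and then decreases on `[0, π/4]`,
and stays above its values at the endpoints. -/

theorem nonneg_of_endpoints_of_deriv_nonneg_downward {f f' : ℝ → ℝ} {a b x : ℝ}
    (hf : ∀ y ∈ Icc a b, HasDerivAt f (f' y) y) (ha : 0 ≤ f a) (hb : 0 ≤ f b)
    (hf' : ∀ s ∈ Icc a b, ∀ t ∈ Icc a b, s ≤ t → 0 ≤ f' t → 0 ≤ f' s) (hx : x ∈ Icc a b) :
    0 ≤ f x := by
  have hderiv : ∀ {c d : ℝ}, Icc c d ⊆ Icc a b →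
      ContinuousOn f (Icc c d) ∧
        ∀ y ∈ interior (Icc c d), HasDerivWithinAt f (f' y) (interior (Icc c d)) y :=
    fun hcd => ⟨fun y hy => (hf y (hcd hy)).continuousAt.continuousWithinAt,
      fun y hy => (hf y (hcd (interior_subset hy))).hasDerivWithinAt⟩
  rcases le_or_gt 0 (f' x) with hfx | hfx
  · have hsub : Icc a x ⊆ Icc a b := Icc_subset_Icc le_rfl hx.2
    have hmono := monotoneOn_of_hasDerivWithinAt_nonneg (convex_Icc a x) (hderiv hsub).1
      (hderiv hsub).2 fun y hy => by
        rw [interior_Icc] at hy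
        exact hf' y (hsub (Ioo_subset_Icc_self hy)) x hx hy.2.le hfx
    exact ha.trans (hmono (left_mem_Icc.2 hx.1) (right_mem_Icc.2 hx.1) hx.1)
  · have hsub : Icc x b ⊆ Icc a b := Icc_subset_Icc hx.1 le_rfl
    have hanti := antitoneOn_of_hasDerivWithinAt_nonpos (convex_Icc x b) (hderiv hsub).1
      (hderiv hsub).2 fun y hy => by
        rw [interior_Icc] at hy
        by_contra! hy'
        exact hfx.not_ge (hf' x hx y (hsub (Ioo_subset_Icc_self hy)) hy.1.le hy'.le)
    exact hb.trans (hanti (left_mem_Icc.2 hx.2) (right_mem_Icc.2 hx.2) hx.2)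

theorem concaveOn_mul_cos_sub_mul_sin {k : ℝ} (hk : k ≤ 2) :
    ConcaveOn ℝ (Icc 0 (π / 2)) fun u => u * cos u - k * sin u := by
  refine concaveOn_of_hasDerivWithinAt2_nonpos (convex_Icc _ _) (by fun_prop)
    (f' := fun u => (1 - k) * cos u - u * sin u)
    (f'' := fun u => (k - 2) * sin u - u * cos u) (fun u _ => ?_) (fun u _ => ?_) fun u hu => ?_
  · refine (((hasDerivAt_id u).mul (hasDerivAt_cos u)).sub
      ((hasDerivAt_sin u).const_mul k)).hasDerivWithinAt.congr_deriv ?_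
    simp only [id]; ring
  · refine ((((hasDerivAt_cos u).const_mul (1 - k)).sub
      ((hasDerivAt_id u).mul (hasDerivAt_sin u)))).hasDerivWithinAt.congr_deriv ?_
    simp only [id]; ring
  · rw [interior_Icc] at hu
    have hsin : 0 ≤ sin u := sin_nonneg_of_nonneg_of_le_pi hu.1.le (by linarith [hu.2, pi_pos])
    have hcos : 0 ≤ cos u := cos_nonneg_of_mem_Icc ⟨by linarith [hu.1, pi_pos], hu.2.le⟩
    nlinarith [mul_nonneg hu.1.le hcos]

noncomputable def arcsinGap (l t : ℝ) : ℝ := (l + 2) * sin t - l * t - 2 * t * cos t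

theorem hasDerivAt_arcsinGap (l t : ℝ) :
    HasDerivAt (arcsinGap l) (8 * sin (t / 2) * (t / 2 * cos (t / 2) - l / 4 * sin (t / 2))) t := by
  have hderiv := ((((hasDerivAt_sin t).const_mul (l + 2)).sub ((hasDerivAt_id t).const_mul l)).sub
    (((hasDerivAt_id t).const_mul 2).mul (hasDerivAt_cos t)))
  refine hderiv.congr_deriv ?_
  obtain ⟨u, rfl⟩ : ∃ u, t = 2 * u := ⟨t / 2, by ring⟩
  have hu : 2 * u / 2 = u := by ring
  simp only [hu, id, sin_two_mul, cos_two_mul]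
  linear_combination 2 * l * sin_sq_add_cos_sq u

theorem arcsinGap_nonneg {l b t : ℝ} (hl : l ≤ 8) (hb : b ≤ π) (hgb : 0 ≤ arcsinGap l b)
    (ht : t ∈ Icc 0 b) : 0 ≤ arcsinGap l t := by
  have hconc := concaveOn_mul_cos_sub_mul_sin (k := l / 4) (by linarith)
  refine nonneg_of_endpoints_of_deriv_nonneg_downward (fun y _ => hasDerivAt_arcsinGap l y)
    (by simp [arcsinGap]) hgb (fun s hs r hr hsr hfr => ?_) ht
  rcases hs.1.eq_or_lt with rfl | hs0
  · simp
  have hqr : 0 ≤ r / 2 * cos (r / 2) - l / 4 * sin (r / 2) :=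
    nonneg_of_mul_nonneg_right hfr
      (mul_pos (by norm_num) (sin_pos_of_pos_of_lt_pi (by linarith) (by linarith [hr.2, pi_pos])))
  have hseg : s / 2 ∈ segment ℝ 0 (r / 2) := by
    rw [segment_eq_Icc (by linarith)]
    exact ⟨by linarith, by linarith⟩
  have hqs := (le_min (by simp) hqr).trans
    (hconc.ge_on_segment ⟨le_rfl, by positivity⟩ ⟨by linarith, by linarith [hr.2]⟩ hseg)
  exact mul_nonneg (mul_nonneg (by norm_num)
    (sin_nonneg_of_nonneg_of_le_pi (by linarith) (by linarith [hs.2]))) hqs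

theorem sqrt_one_add_sin_two_mul {t : ℝ} (h : 0 ≤ cos t + sin t) :
    √(1 + sin (2 * t)) = cos t + sin t := by
  rw [← sqrt_sq h, sin_two_mul]
  congr 1
  linear_combination (sin_sq_add_cos_sq t).symm

theorem sqrt_one_sub_sin_two_mul {t : ℝ} (h : 0 ≤ cos t - sin t) :
    √(1 - sin (2 * t)) = cos t - sin t := by
  rw [← sqrt_sq h, sin_two_mul]
  congr 1
  linear_combination (sin_sq_add_cos_sq t).symm

theorem sin_le_cos_of_nonneg_of_le_pi_div_four {t : ℝ} (h0 : 0 ≤ t) (h : t ≤ π / 4) :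
    sin t ≤ cos t := calc
  sin t ≤ sin (π / 4) := sin_le_sin_of_le_of_le_pi_div_two (by linarith) (by linarith) h
  _ = cos (π / 4) := by rw [sin_pi_div_four, cos_pi_div_four]
  _ ≤ cos t := cos_le_cos_of_nonneg_of_le_pi h0 (by linarith) h

theorem arcsin_le_of_arcsinGap_nonneg {l x : ℝ} (hl0 : 0 ≤ l) (hl8 : l ≤ 8)
    (hgap : 0 ≤ arcsinGap l (π / 4)) (hx0 : 0 ≤ x) (hx1 : x ≤ 1) :
    arcsin x ≤ (l + 2) * (√(1 + x) - √(1 - x)) / (l + √(1 + x) + √(1 - x)) := by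
  obtain ⟨t, hθ⟩ : ∃ t, arcsin x = 2 * t := ⟨arcsin x / 2, by ring⟩
  have ht0 : 0 ≤ t := by linarith [arcsin_nonneg.2 hx0]
  have htπ : t ≤ π / 4 := by linarith [arcsin_le_pi_div_two x]
  have hx : x = sin (2 * t) := by rw [← hθ, sin_arcsin (by linarith) hx1]
  have hsin : 0 ≤ sin t := sin_nonneg_of_nonneg_of_le_pi ht0 (by linarith)
  have hcos : 0 < cos t := cos_pos_of_mem_Ioo ⟨by linarith [pi_pos], by linarith [pi_pos]⟩
  have hsc := sin_le_cos_of_nonneg_of_le_pi_div_four ht0 htπ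
  rw [hθ, hx, sqrt_one_add_sin_two_mul (by linarith), sqrt_one_sub_sin_two_mul (by linarith),
    le_div_iff₀ (by linarith)]
  have := arcsinGap_nonneg hl8 (by linarith [pi_pos]) hgap ⟨ht0, htπ⟩
  rw [arcsinGap] at this
  linarith

noncomputable def phiLambda : ℝ := √2 * (4 - π) / (π - 2 * √2)

theorem pi_sub_two_mul_sqrt_two_pos : 0 < π - 2 * √2 := by
  have : √2 < 3 / 2 := (sqrt_lt' (by norm_num)).2 (by norm_num)
  linarith [pi_gt_three]

theorem phiLambda_nonneg : 0 ≤ phiLambda :=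
  div_nonneg (mul_nonneg (sqrt_nonneg 2) (by linarith [pi_lt_four]))
    pi_sub_two_mul_sqrt_two_pos.le

theorem phiLambda_le_eight : phiLambda ≤ 8 := by
  have : √2 < 71 / 50 := (sqrt_lt' (by norm_num)).2 (by norm_num)
  rw [phiLambda, div_le_iff₀ pi_sub_two_mul_sqrt_two_pos]
  linarith [pi_gt_d2, mul_nonneg (sqrt_nonneg 2) (sub_nonneg.2 pi_gt_d2.le)]

theorem phiLambda_add_two : phiLambda + 2 = π * (2 - √2) / (π - 2 * √2) := by
  rw [phiLambda, div_add' _ _ _ pi_sub_two_mul_sqrt_two_pos.ne']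
  ring

theorem arcsinGap_phiLambda_pi_div_four : arcsinGap phiLambda (π / 4) = 0 := by
  have h : phiLambda * (π - 2 * √2) = √2 * (4 - π) :=
    div_mul_cancel₀ _ pi_sub_two_mul_sqrt_two_pos.ne'
  rw [arcsinGap, sin_pi_div_four, cos_pi_div_four]
  linear_combination (-1 / 4 : ℝ) * h

theorem phiBound_eq (x : ℝ) :
    phiBound x = (phiLambda + 2) * (√(1 + x) - √(1 - x)) / (phiLambda + √(1 + x) + √(1 - x)) := by
  rw [phiBound, phiLambda_add_two, phiLambda]

theorem arcsin_le_phiBound (x : ℝ) (hx : 0 ≤ x) (hx' : x ≤ 1) :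
    Real.arcsin x ≤ phiBound x := by
  rw [phiBound_eq]
  exact arcsin_le_of_arcsinGap_nonneg phiLambda_nonneg phiLambda_le_eight
    arcsinGap_phiLambda_pi_div_four.ge hx hx'
end

section
/- For every real number x with 0 ≤ x ≤ 1, φ(x) ≤ π(√2 + 1/2)·(√(1 + x) − √(1 − x))/(4 + √(1 + x) + √(1 − x)), where φ(x) = (π(2 − √2)/(π − 2√2))·(√(1 + x) − √(1 − x)) / (√2(4 − π)/(π − 2√2) + √(1 + x) + √(1 − x)). -/
open Real

lemma sqrt_two_le_sqrt_one_add_add_sqrt_one_sub {x : ℝ} (h₁ : -1 ≤ x) (h₂ : x ≤ 1) :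
    √2 ≤ √(1 + x) + √(1 - x) := by
  have hsq : (√(1 + x) + √(1 - x)) ^ 2 = 2 + 2 * (√(1 + x) * √(1 - x)) := by
    rw [add_sq, sq_sqrt (by linarith), sq_sqrt (by linarith)]
    ring
  rw [← sqrt_sq (by positivity : 0 ≤ √(1 + x) + √(1 - x)), hsq]
  gcongr
  exact le_add_of_nonneg_right (by positivity)

lemma two_mul_sqrt_two_lt_pi : 2 * √2 < π := by
  linarith [sqrt_two_lt_three_halves, pi_gt_three]

lemma six_le_pi_mul_sqrt_two_add_half : 6 ≤ π * (√2 + 1 / 2) := by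
  have hsqrt : (1.414 : ℝ) < √2 := (lt_sqrt (by norm_num)).2 (by norm_num)
  calc (6 : ℝ) ≤ 3.14 * (1.414 + 1 / 2) := by norm_num
    _ ≤ π * (√2 + 1 / 2) := by gcongr; exact pi_gt_d2.le

lemma lambda_form_le_zhu_form {p s d : ℝ} (hp : 2 * √2 < p) (hp₆ : 6 ≤ p * (√2 + 1 / 2))
    (hs : √2 ≤ s) (hd : 0 ≤ d) :
    p * (2 - √2) / (p - 2 * √2) * d / (√2 * (4 - p) / (p - 2 * √2) + s) ≤
      p * (√2 + 1 / 2) * d / (4 + s) := by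
  have hsub : 0 < p - 2 * √2 := by linarith
  have hpos : 0 < √2 * (4 - p) + (p - 2 * √2) * s := by
    nlinarith [one_lt_sqrt_two, sq_sqrt (show (0 : ℝ) ≤ 2 by norm_num)]
  have hlhs : p * (2 - √2) / (p - 2 * √2) * d / (√2 * (4 - p) / (p - 2 * √2) + s) =
      p * (2 - √2) * d / (√2 * (4 - p) + (p - 2 * √2) * s) := by
    field_simp
  rw [hlhs, div_le_div_iff₀ hpos (by linarith [one_lt_sqrt_two])]
  have key : 0 ≤ p * d * (s - √2) * (p * (√2 + 1 / 2) - 6) := by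
    have : 0 ≤ p := by linarith [sqrt_nonneg 2]
    have : 0 ≤ s - √2 := by linarith
    have : 0 ≤ p * (√2 + 1 / 2) - 6 := by linarith
    positivity
  linear_combination key + p * d * (2 * s - 4) * sq_sqrt (show (0 : ℝ) ≤ 2 by norm_num)

theorem phiBound_le_zhu (x : ℝ) (hx : 0 ≤ x) (hx' : x ≤ 1) :
    phiBound x ≤
      Real.pi * (Real.sqrt 2 + 1 / 2) * (Real.sqrt (1 + x) - Real.sqrt (1 - x)) /
        (4 + Real.sqrt (1 + x) + Real.sqrt (1 - x)) := by
  have hs := sqrt_two_le_sqrt_one_add_add_sqrt_one_sub (by linarith) hx'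
  have hd : 0 ≤ √(1 + x) - √(1 - x) := sub_nonneg.2 (sqrt_le_sqrt (by linarith))
  simpa only [phiBound, add_assoc] using
    lambda_form_le_zhu_form two_mul_sqrt_two_lt_pi six_le_pi_mul_sqrt_two_add_half hs hd
end
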